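/- arXiv:2301.02171 — 5 statements merged into one kernel-verified Lean document; each statement's English description precedes it below -/
import Mathlib

section
/- If the density ratio f/g is bounded above by a constant M on the support of f, then the Kullback-Leibler divergence K(f;g) = ∫ log(f/g) f dx satisfies K(f;g) ≤ 2M H²(f,g), where H² is the squared Hellinger distance. -/
/-!
Write `klFun t = t log t + 1 - t` and `s = √(f/g)`, so that `f log(f/g) + g - f = g · klFun (s²)`
and `g (s - 1)² = (√f - √g)²`. The function `φ s = klFun (s²)` vanishes to second order at `1`
with `φ'' s = 4 (1 + log s)`; comparing derivatives gives `φ s ≤ 2 max 1 s · (s - 1)²`, and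
`max 1 s ≤ M` because `s² ≤ M` and `M ≥ 1` (integrate `f ≤ M g`). Integrating the pointwise bound
proves the claim, since `∫ (g - f) = 0`.
-/

open Real MeasureTheory InformationTheory

lemma hasDerivAt_klFun_sq {s : ℝ} (hs : s ≠ 0) :
    HasDerivAt (fun s => klFun (s ^ 2)) (4 * s * log s) s := by
  have h := (hasDerivAt_klFun (pow_ne_zero 2 hs)).comp (h := fun x : ℝ => x ^ 2) s
    (hasDerivAt_pow 2 s)
  refine h.congr_deriv ?_
  rw [Real.log_pow]
  push_cast
  ring

lemma klFun_sq_le_of_le_one {s : ℝ} (hs0 : 0 ≤ s) (hs1 : s ≤ 1) :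
    klFun (s ^ 2) ≤ 2 * (s - 1) ^ 2 := by
  have hanti : AntitoneOn (fun s => 2 * (s - 1) ^ 2 - klFun (s ^ 2)) (Set.Icc s 1) := by
    refine antitoneOn_of_hasDerivWithinAt_nonpos (f' := fun u => 4 * (u - 1) - 4 * u * log u)
      (convex_Icc s 1) (by fun_prop) (fun u hu => ?_) (fun u hu => ?_)
    all_goals rw [interior_Icc] at hu; have hu0 : 0 < u := hs0.trans_lt hu.1
    · have h := ((((hasDerivAt_id' u).sub_const 1).fun_pow 2).const_mul 2).fun_sub
        (hasDerivAt_klFun_sq hu0.ne')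
      exact (h.congr_deriv (by ring)).hasDerivWithinAt
    · linarith [self_sub_one_le_mul_log hu0.le]
  simpa [klFun_one] using hanti ⟨le_rfl, hs1⟩ ⟨hs1, le_rfl⟩ hs1

lemma klFun_sq_le_of_one_le {s : ℝ} (hs : 1 ≤ s) :
    klFun (s ^ 2) ≤ 2 * s * (s - 1) ^ 2 := by
  have hmono : MonotoneOn (fun s => 2 * s * (s - 1) ^ 2 - klFun (s ^ 2)) (Set.Icc 1 s) := by
    refine monotoneOn_of_hasDerivWithinAt_nonneg
      (f' := fun u => 2 * (u - 1) ^ 2 + 4 * u * (u - 1) - 4 * u * log u)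
      (convex_Icc 1 s) (by fun_prop) (fun u hu => ?_) (fun u hu => ?_)
    all_goals rw [interior_Icc] at hu; have hu0 : 0 < u := one_pos.trans hu.1
    · have h := (((hasDerivAt_id' u).const_mul 2).fun_mul
        (((hasDerivAt_id' u).sub_const 1).fun_pow 2)).fun_sub (hasDerivAt_klFun_sq hu0.ne')
      exact (h.congr_deriv (by ring)).hasDerivWithinAt
    · nlinarith [mul_le_mul_of_nonneg_left (log_le_sub_one_of_pos hu0) hu0.le]
  simpa [klFun_one] using hmono ⟨le_rfl, hs⟩ ⟨hs, le_rfl⟩ hs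

lemma klFun_sq_le {s : ℝ} (hs : 0 ≤ s) : klFun (s ^ 2) ≤ 2 * max 1 s * (s - 1) ^ 2 := by
  rcases le_total s 1 with h | h
  · simpa [max_eq_left h] using klFun_sq_le_of_le_one hs h
  · simpa [max_eq_right h] using klFun_sq_le_of_one_le h

lemma mul_klFun_div {a b : ℝ} (hb : b ≠ 0) :
    b * klFun (a / b) = a * log (a / b) + b - a := by
  rw [klFun_apply]
  field_simp

lemma mul_log_div_add_sub_nonneg {a b : ℝ} (ha : 0 ≤ a) (hb : 0 ≤ b) (hab : b = 0 → a = 0) :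
    0 ≤ a * log (a / b) + b - a := by
  rcases hb.eq_or_lt with rfl | hb
  · simp [hab rfl]
  · rw [← mul_klFun_div hb.ne']
    exact mul_nonneg hb.le (klFun_nonneg (div_nonneg ha hb.le))

lemma mul_log_div_add_sub_le {M a b : ℝ} (hM : 1 ≤ M) (ha : 0 ≤ a) (hb : 0 ≤ b)
    (hab : a ≤ M * b) : a * log (a / b) + b - a ≤ 2 * M * (√a - √b) ^ 2 := by
  rcases hb.eq_or_lt with rfl | hb
  · obtain rfl : a = 0 := by linarith
    simp
  set s := √a / √b
  have hsb : √b * s = √a := mul_div_cancel₀ _ (sqrt_pos.2 hb).ne'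
  have hs2 : s ^ 2 = a / b := by rw [div_pow, sq_sqrt ha, sq_sqrt hb.le]
  have hs2M : s ^ 2 ≤ M := hs2 ▸ (div_le_iff₀ hb).2 hab
  have hsM : max 1 s ≤ M := max_le hM (by nlinarith)
  calc a * log (a / b) + b - a = b * klFun (s ^ 2) := by rw [hs2, mul_klFun_div hb.ne']
    _ ≤ b * (2 * max 1 s * (s - 1) ^ 2) := by gcongr; exact klFun_sq_le (by positivity)
    _ ≤ b * (2 * M * (s - 1) ^ 2) := by gcongr
    _ = 2 * M * (√a - √b) ^ 2 := by
      rw [← hsb]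
      linear_combination (2 * M * (s - 1) ^ 2) * (sq_sqrt hb.le).symm

lemma MeasureTheory.Integrable.sqrt_sub_sqrt_sq {α : Type*} [MeasurableSpace α] {μ : Measure α}
    {f g : α → ℝ} (hf : Integrable f μ) (hg : Integrable g μ)
    (hf0 : ∀ x, 0 ≤ f x) (hg0 : ∀ x, 0 ≤ g x) :
    Integrable (fun x => (√(f x) - √(g x)) ^ 2) μ := by
  refine (hf.add hg).mono'
    ((hf.aemeasurable.sqrt.sub hg.aemeasurable.sqrt).pow_const 2).aestronglyMeasurable
    (ae_of_all _ fun x => ?_)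
  rw [Real.norm_eq_abs, abs_of_nonneg (sq_nonneg _), Pi.add_apply]
  nlinarith [sq_sqrt (hf0 x), sq_sqrt (hg0 x), mul_nonneg (sqrt_nonneg (f x)) (sqrt_nonneg (g x))]

theorem kl_le_hellinger_general {α : Type*} [MeasurableSpace α] (μ : Measure α)
    (f g : α → ℝ) (M : ℝ) (hM : 0 < M)
    (hf0 : ∀ x, 0 ≤ f x) (hg0 : ∀ x, 0 ≤ g x)
    (hf1 : ∫ x, f x ∂μ = 1) (hg1 : ∫ x, g x ∂μ = 1)
    (hratio : ∀ x, f x ≠ 0 → f x ≤ M * g x) :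
    ∫ x, f x * Real.log (f x / g x) ∂μ ≤
      2 * M * ∫ x, (Real.sqrt (f x) - Real.sqrt (g x)) ^ 2 ∂μ := by
  have hf : Integrable f μ := .of_integral_ne_zero (by simp [hf1])
  have hg : Integrable g μ := .of_integral_ne_zero (by simp [hg1])
  have hfg (x : α) : f x ≤ M * g x := by
    by_cases h : f x = 0
    · simpa [h] using mul_nonneg hM.le (hg0 x)
    · exact hratio x h
  have hM1 : 1 ≤ M := by
    simpa [hf1, hg1, integral_const_mul] using integral_mono hf (hg.const_mul M) hfg
  have hbound (x : α) := mul_log_div_add_sub_le hM1 (hf0 x) (hg0 x) (hfg x)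
  have hH := (hf.sqrt_sub_sqrt_sq hg hf0 hg0).const_mul (2 * M)
  have hK : Integrable (fun x => f x * log (f x / g x) + g x - f x) μ := by
    refine hH.mono' (((hf.aemeasurable.mul (hf.aemeasurable.div hg.aemeasurable).log).add
      hg.aemeasurable).sub hf.aemeasurable).aestronglyMeasurable (ae_of_all _ fun x => ?_)
    rw [Real.norm_eq_abs, abs_of_nonneg (mul_log_div_add_sub_nonneg (hf0 x) (hg0 x) fun h => ?_)]
    · exact hbound x
    · exact le_antisymm (by simpa [h] using hfg x) (hf0 x)
  have hKL : Integrable (fun x => f x * log (f x / g x)) μ := by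
    refine ((hK.sub hg).add hf).congr (ae_of_all _ fun x => ?_)
    simp only [Pi.add_apply, Pi.sub_apply]
    ring
  calc ∫ x, f x * log (f x / g x) ∂μ = ∫ x, (f x * log (f x / g x) + g x - f x) ∂μ := by
        rw [integral_sub ?_ hf, integral_add hKL hg, hf1, hg1, add_sub_cancel_right]
        exact hKL.add hg
    _ ≤ ∫ x, 2 * M * (√(f x) - √(g x)) ^ 2 ∂μ := integral_mono hK hH hbound
    _ = 2 * M * ∫ x, (√(f x) - √(g x)) ^ 2 ∂μ := integral_const_mul _ _

/-- If the density ratio f/g is bounded above by M on the support of f, then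
the Kullback-Leibler divergence satisfies K(f;g) ≤ 2 M H²(f,g). -/
theorem kl_le_hellinger {α : Type*} [MeasurableSpace α] (μ : Measure α)
    (f g : α → ℝ) (M : ℝ) (hM : 0 < M)
    (hfm : Measurable f) (hgm : Measurable g)
    (hf0 : ∀ x, 0 ≤ f x) (hg0 : ∀ x, 0 ≤ g x)
    (hf1 : ∫ x, f x ∂μ = 1) (hg1 : ∫ x, g x ∂μ = 1)
    (hratio : ∀ x, f x ≠ 0 → f x ≤ M * g x) :
    ∫ x, f x * Real.log (f x / g x) ∂μ ≤
      2 * M * ∫ x, (Real.sqrt (f x) - Real.sqrt (g x)) ^ 2 ∂μ :=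
  kl_le_hellinger_general μ f g M hM hf0 hg0 hf1 hg1 hratio
end

section
/- For γ > 0 and any β ∈ (0,1), the integral R(v) = ∫_{v^{-(1-β)}}^{1} γ z^{γ-1}(1 - z^{a}) dz, where a = A(v^β) → 0 as v → ∞, satisfies R(v) = O(v^{-γ(1-β)} ∨ |A(v^β)|) as v → ∞, provided |A| is bounded. -/
/-! Since `1 - z ^ a = 1 - exp (a log z)` and `-log z` grows more slowly than any negative power
of `z`, the integrand is bounded on `(0, 1]` by `4 |a| z ^ (γ / 2 - 1)` once `|a| ≤ γ / 4`, and
this majorant has integral at most `8 |a| / γ` over every `[ε, 1]` with `0 ≤ ε`. Hence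
`R(v) = O(|A(v ^ β)|)`, which is stronger than the claim. -/

open Real Filter Asymptotics Topology

lemma Real.abs_exp_sub_one_le_mul_exp_abs (x : ℝ) : |exp x - 1| ≤ |x| * exp |x| := by
  rcases le_total 0 x with hx | hx
  · have h : (1 - x) * exp x ≤ 1 := by
      simpa [← exp_add] using
        mul_le_mul_of_nonneg_right (one_sub_le_exp_neg x) (exp_pos x).le
    rw [abs_of_nonneg (by linarith [one_le_exp hx]), abs_of_nonneg hx]
    linarith
  · rw [abs_of_nonpos (by linarith [exp_le_one_iff.2 hx]), abs_of_nonpos hx]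
    nlinarith [add_one_le_exp x, one_le_exp (neg_nonneg.2 hx)]

lemma Real.neg_log_le_rpow_neg_div {z s : ℝ} (hz : 0 < z) (hs : 0 < s) :
    -log z ≤ z ^ (-s) / s := by
  simpa [log_inv, inv_rpow hz.le, ← rpow_neg hz.le] using log_le_rpow_div (inv_pos.2 hz).le hs

lemma abs_one_sub_rpow_le {z a s : ℝ} (hz0 : 0 < z) (hz1 : z ≤ 1) (hs : 0 < s) :
    |1 - z ^ a| ≤ |a| / s * z ^ (-(s + |a|)) := by
  have hlog : |a * log z| = |a| * -log z := by
    rw [abs_mul, abs_of_nonpos (log_nonpos hz0.le hz1)]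
  calc |1 - z ^ a| = |exp (a * log z) - 1| := by
        rw [abs_sub_comm, rpow_def_of_pos hz0, mul_comm]
    _ ≤ |a| * -log z * exp (|a| * -log z) := by
        simpa only [hlog] using abs_exp_sub_one_le_mul_exp_abs (a * log z)
    _ = |a| * -log z * z ^ (-|a|) := by
        rw [rpow_def_of_pos hz0]; ring_nf
    _ ≤ |a| * (z ^ (-s) / s) * z ^ (-|a|) := by
        gcongr; exact neg_log_le_rpow_neg_div hz0 hs
    _ = |a| / s * z ^ (-(s + |a|)) := by
        rw [neg_add, rpow_add hz0]; ring

lemma norm_mul_rpow_mul_one_sub_rpow_le {γ a z : ℝ} (hγ : 0 < γ) (ha : |a| ≤ γ / 4)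
    (hz0 : 0 < z) (hz1 : z ≤ 1) :
    ‖γ * z ^ (γ - 1) * (1 - z ^ a)‖ ≤ 4 * |a| * z ^ (γ / 2 - 1) := by
  have hpow : z ^ (-(γ / 4 + |a|)) ≤ z ^ (-(γ / 2)) :=
    rpow_le_rpow_of_exponent_ge hz0 hz1 (by linarith)
  calc ‖γ * z ^ (γ - 1) * (1 - z ^ a)‖ = γ * z ^ (γ - 1) * |1 - z ^ a| := by
        rw [norm_mul, norm_of_nonneg (by positivity), norm_eq_abs]
    _ ≤ γ * z ^ (γ - 1) * (|a| / (γ / 4) * z ^ (-(γ / 2))) := by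
        gcongr
        exact (abs_one_sub_rpow_le hz0 hz1 (by positivity)).trans
          (mul_le_mul_of_nonneg_left hpow (by positivity))
    _ = 4 * |a| * z ^ (γ / 2 - 1) := by
        rw [mul_mul_mul_comm, ← rpow_add hz0]; field_simp; ring_nf

lemma integral_rpow_sub_one_le {ε r : ℝ} (hε0 : 0 ≤ ε) (hr : 0 < r) :
    ∫ z in ε..1, z ^ (r - 1) ≤ 1 / r := by
  rw [integral_rpow (Or.inl (by linarith)), sub_add_cancel, one_rpow]
  gcongr
  linarith [rpow_nonneg hε0 r]

lemma norm_integral_mul_rpow_mul_one_sub_rpow_le {γ a ε : ℝ} (hγ : 0 < γ) (ha : |a| ≤ γ / 4)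
    (hε0 : 0 ≤ ε) (hε1 : ε ≤ 1) :
    ‖∫ z in ε..1, γ * z ^ (γ - 1) * (1 - z ^ a)‖ ≤ 8 / γ * |a| :=
  calc ‖∫ z in ε..1, γ * z ^ (γ - 1) * (1 - z ^ a)‖
      ≤ ∫ z in ε..1, 4 * |a| * z ^ (γ / 2 - 1) :=
        intervalIntegral.norm_integral_le_of_norm_le hε1
          (.of_forall fun z hz => norm_mul_rpow_mul_one_sub_rpow_le hγ ha
            (hε0.trans_lt hz.1) hz.2)
          ((intervalIntegral.intervalIntegrable_rpow' (by linarith)).const_mul _)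
    _ ≤ 4 * |a| * (1 / (γ / 2)) := by
        rw [intervalIntegral.integral_const_mul]
        gcongr
        exact integral_rpow_sub_one_le hε0 (by positivity)
    _ = 8 / γ * |a| := by field_simp; ring

theorem integral_bigO_bound_general (γ β : ℝ) (hγ : 0 < γ) (hβ0 : 0 < β) (hβ1 : β < 1)
    (A : ℝ → ℝ)
    (hA0 : Tendsto A atTop (nhds 0)) :
    (fun v : ℝ =>
        ∫ z in (v ^ (-(1 - β)))..1, γ * z ^ (γ - 1) * (1 - z ^ A (v ^ β)))
      =O[atTop] fun v : ℝ => max (v ^ (-γ * (1 - β))) |A (v ^ β)| := by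
  have hA : Tendsto (fun v => |A (v ^ β)|) atTop (𝓝 0) := by
    simpa using (hA0.comp (tendsto_rpow_atTop hβ0)).abs
  refine IsBigO.trans (g := fun v => |A (v ^ β)|) ?_ (isBigO_of_le _ fun v => ?_)
  · refine IsBigO.of_bound (8 / γ) ?_
    filter_upwards [eventually_ge_atTop 1,
      hA.eventually (eventually_le_nhds (by positivity : 0 < γ / 4))] with v hv ha
    rw [norm_abs_eq_norm, norm_eq_abs]
    exact norm_integral_mul_rpow_mul_one_sub_rpow_le hγ ha (by positivity)
      (rpow_le_one_of_one_le_of_nonpos hv (by linarith))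
  · rw [norm_abs_eq_norm, norm_eq_abs, norm_of_nonneg ((abs_nonneg _).trans (le_max_right _ _))]
    exact le_max_right _ _

/-- For γ > 0 and β ∈ (0,1), with A bounded and A(v) → 0 as v → ∞, the
integral R(v) = ∫_{v^{-(1-β)}}^{1} γ z^{γ-1}(1 - z^{A(v^β)}) dz satisfies
R(v) = O(v^{-γ(1-β)} ∨ |A(v^β)|) as v → ∞. -/
theorem integral_bigO_bound (γ β : ℝ) (hγ : 0 < γ) (hβ0 : 0 < β) (hβ1 : β < 1)
    (A : ℝ → ℝ) (hAbdd : ∃ C, ∀ v, |A v| ≤ C)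
    (hA0 : Tendsto A atTop (nhds 0)) :
    (fun v : ℝ =>
        ∫ z in (v ^ (-(1 - β)))..1, γ * z ^ (γ - 1) * (1 - z ^ A (v ^ β)))
      =O[atTop] fun v : ℝ => max (v ^ (-γ * (1 - β))) |A (v ^ β)| :=
  integral_bigO_bound_general γ β hγ hβ0 hβ1 A hA0
end

section
/- Let F be twice differentiable with density f, and suppose the von Mises condition lim_{x→∞} x f(x)/(1-F(x)) = 1/γ holds for some γ > 0. If additionally ∫_{t*}^∞ |η(t)|/(1+γt) dt < ∞ where η(t) = (1+γt)f(t)/(1-F(t)) - 1, then the limit τ = lim_{t→∞} (1-F(t))/(1-H_γ(t)) exists and lies in (0,∞). -/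
open Real Filter MeasureTheory

/-- Under the von Mises condition for γ > 0 and integrability of
|η(t)|/(1+γt) at infinity, where η(t) = (1+γt)f(t)/(1-F(t)) - 1, the limit
τ = lim_{t→∞} (1-F(t))/(1-H_γ(t)) exists in (0,∞). -/
theorem tail_equivalence (γ : ℝ) (hγ : 0 < γ) (F f : ℝ → ℝ)
    (hF : ∀ x, HasDerivAt F (f x) x) (hf : Differentiable ℝ f)
    (hF1 : ∀ x, F x < 1)
    (hvm : Tendsto (fun x => x * f x / (1 - F x)) atTop (nhds (1 / γ)))
    (tstar : ℝ)
    (hint : IntegrableOn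
      (fun t => |(1 + γ * t) * f t / (1 - F t) - 1| / (1 + γ * t))
      (Set.Ioi tstar)) :
    ∃ τ : ℝ, 0 < τ ∧
      Tendsto (fun t => (1 - F t) / (1 - (1 - (1 + γ * t) ^ (-1 / γ))))
        atTop (nhds τ) := by
  have hγ0 : γ ≠ 0 := hγ.ne'
  set a : ℝ := max tstar 1 with ha
  have hFc : Continuous F := by
    rw [continuous_iff_continuousAt]; intro x; exact (hF x).continuousAt
  have hfc : Continuous f := hf.continuous
  have hpos : ∀ t : ℝ, 1 ≤ t → 0 < 1 + γ * t := by
    intro t ht; nlinarith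
  have hFlt : ∀ t : ℝ, 0 < 1 - F t := fun t => sub_pos.mpr (hF1 t)
  set g : ℝ → ℝ := fun t => -f t / (1 - F t) + (1/γ) * (γ / (1 + γ * t)) with hg
  set G : ℝ → ℝ := fun t => Real.log (1 - F t) + (1/γ) * Real.log (1 + γ * t) with hG
  have hderiv : ∀ t : ℝ, 1 ≤ t → HasDerivAt G (g t) t := by
    intro t ht
    have h1 : HasDerivAt (fun t => 1 - F t) (-f t) t := by
      simpa using (hF t).const_sub 1
    have h2 : HasDerivAt (fun t => Real.log (1 - F t)) (-f t / (1 - F t)) t :=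
      h1.log (hFlt t).ne'
    have h3 : HasDerivAt (fun t => 1 + γ * t) γ t := by
      simpa using ((hasDerivAt_id t).const_mul γ).const_add 1
    have h4 : HasDerivAt (fun t => Real.log (1 + γ * t)) (γ / (1 + γ * t)) t :=
      h3.log (hpos t ht).ne'
    exact h2.add (h4.const_mul (1/γ))
  have hgc : ContinuousOn g (Set.Ici (1:ℝ)) := by
    apply ContinuousOn.add
    · exact (hfc.neg.continuousOn).div ((continuous_const.sub hFc).continuousOn)
        (fun t _ => (hFlt t).ne')
    · exact continuousOn_const.mul (continuousOn_const.div (Continuous.continuousOn (by continuity))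
        (fun t ht => (hpos t ht).ne'))
  have h1a : (1:ℝ) ≤ a := le_max_right _ _
  have hginta : IntegrableOn g (Set.Ioi a) := by
    apply MeasureTheory.Integrable.mono'
      (hint.mono_set (Set.Ioi_subset_Ioi (le_max_left _ _)))
    · exact ((hgc.mono (fun x hx => le_trans h1a (le_of_lt hx))).aestronglyMeasurable
        measurableSet_Ioi)
    · filter_upwards [ae_restrict_mem measurableSet_Ioi] with t ht
      have h1t : (1:ℝ) ≤ t := le_trans h1a (le_of_lt ht)
      have hp := hpos t h1t
      have hgt : g t = -(((1 + γ * t) * f t / (1 - F t) - 1) / (1 + γ * t)) := by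
        rw [hg]
        field_simp
        ring
      rw [Real.norm_eq_abs, hgt, abs_neg, abs_div, abs_of_pos hp]
  set I : ℝ := ∫ t in Set.Ioi a, g t with hI
  have hlim : Tendsto (fun t => ∫ s in a..t, g s) atTop (nhds I) :=
    intervalIntegral_tendsto_integral_Ioi a hginta tendsto_id
  have hftc : ∀ t, a ≤ t → ∫ s in a..t, g s = G t - G a := by
    intro t ht
    apply intervalIntegral.integral_eq_sub_of_hasDerivAt
    · intro s hs
      rw [Set.uIcc_of_le ht] at hs
      exact hderiv s (le_trans h1a hs.1)
    · apply (hgc.mono ?_).intervalIntegrable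
      rw [Set.uIcc_of_le ht]
      intro s hs; exact le_trans h1a hs.1
  have hGlim : Tendsto G atTop (nhds (I + G a)) := by
    have h := hlim.add (tendsto_const_nhds (x := G a))
    apply h.congr'
    filter_upwards [eventually_ge_atTop a] with t ht
    rw [hftc t ht]; ring
  refine ⟨Real.exp (I + G a), Real.exp_pos _, ?_⟩
  have hexp : Tendsto (fun t => Real.exp (G t)) atTop (nhds (Real.exp (I + G a))) :=
    (Real.continuous_exp.tendsto _).comp hGlim
  apply hexp.congr'
  filter_upwards [eventually_ge_atTop (1:ℝ)] with t ht
  have hp := hpos t ht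
  have key : (1 + γ * t) ^ (-1/γ) = ((1 + γ * t) ^ (1/γ))⁻¹ := by
    rw [← Real.rpow_neg hp.le, neg_div, one_div]
  rw [sub_sub_cancel, key, div_eq_mul_inv, inv_inv, hG]
  rw [Real.exp_add, Real.exp_log (hFlt t), Real.rpow_def_of_pos hp, mul_comm (1/γ)]
end

section
/- For probability densities f, g with f/g bounded by M on the support of f, the higher-order divergence D_p(f;g) = ∫|log(f/g)|^p f dx satisfies D_p(f;g) ≤ 2·p!·M·H²(f,g) for every integer p ≥ 2, where H² is the squared Hellinger distance. -/
open Real MeasureTheory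

private lemma two_pow_le_fact (n : ℕ) : 2 ^ n ≤ (n + 1).factorial := by
  induction n with
  | zero => simp
  | succ m ih =>
    calc 2 ^ (m+1) = 2 * 2 ^ m := by ring
    _ ≤ 2 * (m+1).factorial := by omega
    _ ≤ (m+2) * (m+1).factorial := by
        have : 2 ≤ m + 2 := by omega
        exact Nat.mul_le_mul_right _ this
    _ = (m+2).factorial := rfl

private lemma exp_sub_exp_neg (b : ℝ) (hb : 0 ≤ b) : 2 * b ≤ Real.exp b - Real.exp (-b) := by
  rcases eq_or_lt_of_le hb with h | h
  · simp [← h]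
  · have h1 : b < Real.sinh b := Real.self_lt_sinh_iff.2 h
    rw [Real.sinh_eq] at h1
    linarith

private lemma exp_half_sub_one (x : ℝ) (hx : 0 ≤ x) :
    x / 2 * Real.exp (x / 4) ≤ Real.exp (x / 2) - 1 := by
  have h := exp_sub_exp_neg (x / 4) (by linarith)
  have e1 : Real.exp (x / 4) * (Real.exp (x / 4) - Real.exp (-(x / 4))) =
      Real.exp (x / 2) - 1 := by
    rw [mul_sub, ← Real.exp_add, ← Real.exp_add]
    norm_num
    rw [show x/4 + x/4 = x/2 by ring]
  nlinarith [Real.exp_pos (x / 4)]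

private lemma taylor3 (k : ℕ) (x : ℝ) (hx : 0 ≤ x) :
    x ^ (k+1) / (k+1).factorial + x ^ (k+2) / (k+2).factorial
      + x ^ (k+3) / (k+3).factorial ≤ Real.exp x := by
  have h := Real.sum_le_exp_of_nonneg hx (k+4)
  rw [Finset.sum_range_succ, Finset.sum_range_succ, Finset.sum_range_succ] at h
  have hpos : (0:ℝ) ≤ ∑ i ∈ Finset.range (k+1), x ^ i / i.factorial := by
    apply Finset.sum_nonneg
    intro i _
    positivity
  linarith

private lemma key (k : ℕ) (x : ℝ) (hx : 0 ≤ x) :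
    x ^ (k+2) ≤ 2 * ((k+2).factorial : ℝ) * (Real.exp (x/2) - 1) ^ 2 := by
  have hfac : (0:ℝ) < (k+2).factorial := by
    exact_mod_cast Nat.factorial_pos (k+2)
  rcases le_or_gt x 2 with hx2 | hx2
  · -- small x
    have h1 : x / 2 * Real.exp (x / 4) ≤ Real.exp (x / 2) - 1 := exp_half_sub_one x hx
    have h1' : (x / 2 * Real.exp (x / 4)) ^ 2 ≤ (Real.exp (x / 2) - 1) ^ 2 := by
      apply pow_le_pow_left₀ (by positivity) h1 2
    have hsq : (x / 2 * Real.exp (x / 4)) ^ 2 = x ^ 2 / 4 * Real.exp (x / 2) := by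
      have : Real.exp (x/4) * Real.exp (x/4) = Real.exp (x/2) := by
        rw [← Real.exp_add]; rw [show x/4 + x/4 = x/2 by ring]
      nlinarith [this]
    have hxk : x ^ k ≤ 2 ^ k := pow_le_pow_left₀ hx hx2 k
    have hfge : (2:ℝ) ^ (k+1) ≤ ((k+2).factorial : ℝ) := by
      exact_mod_cast two_pow_le_fact (k+1)
    have hexp1 : (1:ℝ) ≤ Real.exp (x/2) := Real.one_le_exp (by linarith)
    have hchain : x ^ (k+2) = x ^ k * x ^ 2 := by ring
    have h2 : x ^ k * x ^ 2 ≤ 2 ^ k * x ^ 2 :=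
      mul_le_mul_of_nonneg_right hxk (sq_nonneg x)
    -- 2 * (k+2)! * (e^{x/2}-1)^2 ≥ 2 * (k+2)! * x^2/4 * e^{x/2} ≥ 2^k * x^2
    have hx2n : (0:ℝ) ≤ x^2/4 := by positivity
    have h3a : (2:ℝ)^(k+1) * (x^2/4) ≤ ((k+2).factorial : ℝ) * (x^2/4) :=
      mul_le_mul_of_nonneg_right hfge hx2n
    have h3b : ((k+2).factorial : ℝ) * (x^2/4) * 1 ≤
        ((k+2).factorial : ℝ) * (x^2/4) * Real.exp (x/2) :=
      mul_le_mul_of_nonneg_left hexp1 (by positivity)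
    have h3 : 2 * ((k+2).factorial : ℝ) * (x ^ 2 / 4 * Real.exp (x/2)) ≥
        2 * (2:ℝ)^(k+1) * (x^2/4) := by nlinarith [h3a, h3b]
    have h4 : 2 * (2:ℝ)^(k+1) * (x^2/4) = 2^k * x^2 := by ring
    nlinarith [h1', hsq, h2, h3]
  · -- large x
    have h2 : (2:ℝ) ≤ Real.exp (x/2) := by
      have := Real.add_one_le_exp (x/2); linarith
    have h4 : (Real.exp (x/2)) ^ 2 / 4 ≤ (Real.exp (x/2) - 1) ^ 2 := by
      nlinarith [Real.exp_pos (x/2)]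
    have hex : (Real.exp (x/2)) ^ 2 = Real.exp x := by
      rw [sq, ← Real.exp_add]; rw [show x/2 + x/2 = x by ring]
    have htay := taylor3 k x hx
    have hA : (0:ℝ) < ((k+1).factorial : ℝ) := by exact_mod_cast Nat.factorial_pos (k+1)
    have e2 : ((k+2).factorial : ℝ) = (k+2) * ((k+1).factorial : ℝ) := by
      rw [show k+2 = (k+1)+1 from rfl, Nat.factorial_succ]; push_cast; ring
    have e3 : ((k+3).factorial : ℝ) = (k+3) * ((k+2) * ((k+1).factorial : ℝ)) := by
      rw [show k+3 = (k+2)+1 from rfl, Nat.factorial_succ]; push_cast [e2]; ring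
    have e4 : ((k+3).factorial : ℝ) = (k+3) * ((k+2).factorial : ℝ) := by
      rw [show k+3 = (k+2)+1 from rfl, Nat.factorial_succ]; push_cast; ring
    have heq : ((k+3).factorial : ℝ) *
        (x ^ (k+1) / (k+1).factorial + x ^ (k+2) / (k+2).factorial
          + x ^ (k+3) / (k+3).factorial)
        = ((k+3):ℝ) * (k+2) * x^(k+1) + (k+3) * x^(k+2) + x^(k+3) := by
      rw [e3, e2]
      field_simp
    have H1 : ((k+3):ℝ) * (k+2) * x^(k+1) + (k+3) * x^(k+2) + x^(k+3) ≤
        ((k+3).factorial : ℝ) * Real.exp x := by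
      have hm := mul_le_mul_of_nonneg_left htay (by positivity :
        (0:ℝ) ≤ ((k+3).factorial : ℝ))
      rw [heq] at hm
      exact hm
    have hq : ((k+3):ℝ) * x^(k+2) ≤ x^(k+3) + (k+2) * (k+3) * x^(k+1) := by
      have hx1 : (0:ℝ) ≤ x^(k+1) := by positivity
      have hquad : ((k+3):ℝ) * x ≤ x^2 + (k+2)*(k+3) := by
        nlinarith [sq_nonneg (2*x - (k+3)), sq_nonneg x]
      have hmm := mul_le_mul_of_nonneg_left hquad hx1
      calc ((k+3):ℝ) * x^(k+2) = x^(k+1) * ((k+3) * x) := by ring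
        _ ≤ x^(k+1) * (x^2 + (k+2)*(k+3)) := hmm
        _ = x^(k+3) + (k+2) * (k+3) * x^(k+1) := by ring
    have h5 : ((k+3):ℝ) * (2 * x^(k+2)) ≤
        ((k+3):ℝ) * (((k+2).factorial : ℝ) * Real.exp x) := by
      rw [e4] at H1
      linarith [H1, hq]
    have H2 : 2 * x^(k+2) ≤ ((k+2).factorial : ℝ) * Real.exp x := by
      have hk3 : (0:ℝ) < (k+3:ℝ) := by positivity
      exact le_of_mul_le_mul_left h5 hk3
    have hfinal := mul_le_mul_of_nonneg_left h4 (by positivity : (0:ℝ) ≤ 2*((k+2).factorial:ℝ))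
    calc x^(k+2) ≤ ((k+2).factorial : ℝ) * Real.exp x / 2 := by linarith [H2]
      _ = 2 * ((k+2).factorial : ℝ) * ((Real.exp (x/2))^2/4) := by rw [hex]; ring
      _ ≤ 2 * ((k+2).factorial : ℝ) * (Real.exp (x/2) - 1)^2 := hfinal

private lemma core (p : ℕ) (hp : 2 ≤ p) (M t : ℝ) (hM : 1 ≤ M) (ht : 0 < t) (htM : t ≤ M) :
    t * |Real.log t| ^ p ≤ 2 * (p.factorial : ℝ) * M * (Real.sqrt t - 1) ^ 2 := by
  obtain ⟨k, rfl⟩ : ∃ k, p = k + 2 := ⟨p - 2, by omega⟩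
  have hfac : (0:ℝ) < ((k+2).factorial : ℝ) := by exact_mod_cast Nat.factorial_pos (k+2)
  rcases le_or_gt 1 t with h1 | h1
  · have hlog : 0 ≤ Real.log t := Real.log_nonneg h1
    have habs : |Real.log t| = Real.log t := abs_of_nonneg hlog
    set x := Real.log t with hxdef
    have hexp : Real.exp x = t := Real.exp_log ht
    have hsqrt : Real.sqrt t = Real.exp (x/2) := by
      have h2 : Real.exp (x/2) ^ 2 = Real.exp x := by
        rw [sq, ← Real.exp_add]; rw [show x/2 + x/2 = x by ring]
      rw [← hexp, ← h2, Real.sqrt_sq (Real.exp_pos (x/2)).le]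
    have hk := key k x hlog
    rw [habs, hsqrt]
    calc t * x ^ (k+2) ≤ M * x ^ (k+2) :=
        mul_le_mul_of_nonneg_right htM (pow_nonneg hlog _)
      _ ≤ M * (2 * ((k+2).factorial : ℝ) * (Real.exp (x/2) - 1) ^ 2) :=
        mul_le_mul_of_nonneg_left hk (by linarith)
      _ = 2 * ((k+2).factorial : ℝ) * M * (Real.exp (x/2) - 1) ^ 2 := by ring
  · have hlogneg : Real.log t < 0 := Real.log_neg ht h1
    have habs : |Real.log t| = -Real.log t := abs_of_neg hlogneg
    set x := -Real.log t with hxdef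
    have hx : 0 < x := by simp [hxdef]; linarith
    have hexp : Real.exp (-x) = t := by
      rw [hxdef, neg_neg, Real.exp_log ht]
    have hsqrt : Real.sqrt t = Real.exp (-(x/2)) := by
      have h2 : Real.exp (-(x/2)) ^ 2 = Real.exp (-x) := by
        rw [sq, ← Real.exp_add]; rw [show -(x/2) + -(x/2) = -x by ring]
      rw [← hexp, ← h2, Real.sqrt_sq (Real.exp_pos _).le]
    have hk := key k x hx.le
    have e1 : Real.exp (-(x/2)) * Real.exp (-(x/2)) = Real.exp (-x) := by
      rw [← Real.exp_add]; rw [show -(x/2) + -(x/2) = -x by ring]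
    have e3 : Real.exp (-x) * Real.exp (x/2) = Real.exp (-(x/2)) := by
      rw [← Real.exp_add]; rw [show -x + x/2 = -(x/2) by ring]
    have e5 : Real.exp (-(x/2)) * Real.exp (x/2) = 1 := by
      rw [← Real.exp_add]; rw [show -(x/2) + x/2 = 0 by ring, Real.exp_zero]
    have hsq : (Real.exp (-(x/2)) - 1) ^ 2 = Real.exp (-x) * (Real.exp (x/2) - 1) ^ 2 := by
      linear_combination e1 + (2 - Real.exp (x/2)) * e3 - e5
    rw [habs, hsqrt, ← hexp, hsq]
    have hM2 : (Real.exp (x/2) - 1)^2 * 1 ≤ (Real.exp (x/2) - 1)^2 * M :=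
      mul_le_mul_of_nonneg_left hM (sq_nonneg _)
    calc Real.exp (-x) * x ^ (k+2)
        ≤ Real.exp (-x) * (2 * ((k+2).factorial : ℝ) * (Real.exp (x/2) - 1) ^ 2) := by
          apply mul_le_mul_of_nonneg_left _ (Real.exp_pos (-x)).le
          exact hk
      _ ≤ Real.exp (-x) * (2 * ((k+2).factorial : ℝ) * M * (Real.exp (x/2) - 1) ^ 2) := by
          apply mul_le_mul_of_nonneg_left _ (Real.exp_pos (-x)).le
          nlinarith [hM2, hfac]
      _ = 2 * ((k+2).factorial : ℝ) * M * (Real.exp (-x) * (Real.exp (x/2) - 1) ^ 2) := by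
          ring

private lemma ptwise (p : ℕ) (hp : 2 ≤ p) (M a b : ℝ) (hM : 1 ≤ M) (ha : 0 < a) (hb : 0 < b)
    (hab : a ≤ M * b) :
    a * |Real.log (a / b)| ^ p ≤ 2 * (p.factorial : ℝ) * M * (Real.sqrt a - Real.sqrt b) ^ 2 := by
  have ht : 0 < a / b := div_pos ha hb
  have htM : a / b ≤ M := (div_le_iff₀ hb).2 (by linarith)
  have h := core p hp M (a/b) hM ht htM
  have hs : Real.sqrt a - Real.sqrt b = Real.sqrt b * (Real.sqrt (a/b) - 1) := by
    rw [Real.sqrt_div ha.le]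
    have hsb : Real.sqrt b ≠ 0 := by positivity
    field_simp
  have hb' := mul_le_mul_of_nonneg_left h hb.le
  calc a * |Real.log (a/b)| ^ p = b * (a / b * |Real.log (a/b)| ^ p) := by
        field_simp
      _ ≤ b * (2 * (p.factorial : ℝ) * M * (Real.sqrt (a/b) - 1) ^ 2) := hb'
      _ = 2 * (p.factorial : ℝ) * M * (Real.sqrt a - Real.sqrt b) ^ 2 := by
        rw [hs, mul_pow, Real.sq_sqrt hb.le]; ring

/-- For probability densities f, g with f/g bounded by M on the support of f,
the higher-order divergence D_p(f;g) = ∫ f |log(f/g)|^p satisfies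
D_p(f;g) ≤ 2·p!·M·H²(f,g) for every integer p ≥ 2. -/
theorem higher_divergence_le_hellinger {α : Type*} [MeasurableSpace α]
    (μ : Measure α) (f g : α → ℝ) (M : ℝ) (hM : 0 < M)
    (hfm : Measurable f) (hgm : Measurable g)
    (hf0 : ∀ x, 0 ≤ f x) (hg0 : ∀ x, 0 ≤ g x)
    (hf1 : ∫ x, f x ∂μ = 1) (hg1 : ∫ x, g x ∂μ = 1)
    (hratio : ∀ x, f x ≠ 0 → f x ≤ M * g x) :
    ∀ p : ℕ, 2 ≤ p →
      ∫ x, f x * |Real.log (f x / g x)| ^ p ∂μ ≤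
        2 * (Nat.factorial p : ℝ) * M *
          ∫ x, (Real.sqrt (f x) - Real.sqrt (g x)) ^ 2 ∂μ := by
  intro p hp
  have hfle : ∀ x, f x ≤ M * g x := by
    intro x
    by_cases h : f x = 0
    · rw [h]; exact mul_nonneg hM.le (hg0 x)
    · exact hratio x h
  have hfInt : Integrable f μ := by
    by_contra h
    rw [integral_undef h] at hf1
    norm_num at hf1
  have hgInt : Integrable g μ := by
    by_contra h
    rw [integral_undef h] at hg1
    norm_num at hg1
  have hM1 : 1 ≤ M := by
    have h := integral_mono hfInt (hgInt.const_mul M) hfle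
    rw [hf1, integral_const_mul, hg1, mul_one] at h
    exact h
  have hφm : Measurable fun x => (Real.sqrt (f x) - Real.sqrt (g x)) ^ 2 :=
    ((Real.continuous_sqrt.measurable.comp hfm).sub
      (Real.continuous_sqrt.measurable.comp hgm)).pow_const 2
  have hφle : ∀ x, (Real.sqrt (f x) - Real.sqrt (g x)) ^ 2 ≤ f x + g x := by
    intro x
    nlinarith [Real.sq_sqrt (hf0 x), Real.sq_sqrt (hg0 x),
      Real.sqrt_nonneg (f x), Real.sqrt_nonneg (g x),
      mul_nonneg (Real.sqrt_nonneg (f x)) (Real.sqrt_nonneg (g x))]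
  have hφInt : Integrable (fun x => (Real.sqrt (f x) - Real.sqrt (g x)) ^ 2) μ := by
    apply Integrable.mono (hfInt.add hgInt) hφm.aestronglyMeasurable
    filter_upwards with x
    simp only [Pi.add_apply, Real.norm_eq_abs]
    rw [abs_of_nonneg (sq_nonneg _),
      abs_of_nonneg (by have := hf0 x; have := hg0 x; positivity : (0:ℝ) ≤ f x + g x)]
    exact hφle x
  have hle : ∀ x, f x * |Real.log (f x / g x)| ^ p ≤
      2 * (p.factorial : ℝ) * M * (Real.sqrt (f x) - Real.sqrt (g x)) ^ 2 := by
    intro x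
    by_cases hfx : f x = 0
    · rw [hfx, zero_mul]
      have : (0:ℝ) ≤ 2 * (p.factorial : ℝ) * M := by positivity
      exact mul_nonneg this (sq_nonneg _)
    · have hfpos : 0 < f x := (hf0 x).lt_of_ne (Ne.symm hfx)
      have hgpos : 0 < g x := by
        by_contra h
        push_neg at h
        have hg : g x = 0 := le_antisymm h (hg0 x)
        have := hratio x hfx
        rw [hg, mul_zero] at this
        linarith
      exact ptwise p hp M (f x) (g x) hM1 hfpos hgpos (hratio x hfx)
  calc ∫ x, f x * |Real.log (f x / g x)| ^ p ∂μ
      ≤ ∫ x, 2 * (p.factorial : ℝ) * M * (Real.sqrt (f x) - Real.sqrt (g x)) ^ 2 ∂μ := by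
        apply integral_mono_of_nonneg
        · filter_upwards with x
          exact mul_nonneg (hf0 x) (pow_nonneg (abs_nonneg _) p)
        · exact hφInt.const_mul _
        · filter_upwards with x
          exact hle x
    _ = 2 * (Nat.factorial p : ℝ) * M *
          ∫ x, (Real.sqrt (f x) - Real.sqrt (g x)) ^ 2 ∂μ := integral_const_mul _ _
end

section
/- Let q : (0,∞) → ℝ and suppose for constants κ > 0, ε ∈ (0,1/8), and δ ∈ (0,1) small, that |q(y)| ≤ κδe^{2εy} and |log(1+q'(y))| ≤ κδe^{2εy} for all y ∈ (0, -α log δ) with α > 0 and 4εα < 1. Then ∫₀^{-α log δ} e^{-y}[1 - √(e^{-q(y)}(1+q'(y)))]² dy ≤ C δ²(1 - δ^{α(1-4ε)}) for a constant C depending only on κ, ε, α. -/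
/-! Writing `t = κ δ e^{2εy}`, both factors under the square root lie in `[e^{-t}, e^t]`, hence so
does their geometric mean `s`, and `|1 - s| ≤ e^t - 1 ≤ t e^t`. On `(0, -α log δ)` the condition
`2εα ≤ 1` keeps `t ≤ κ`, so the integrand is at most `κ² e^{2κ} δ² e^{(4ε-1)y}`, whose integral is
exactly `κ² e^{2κ} δ² (1 - δ^{α(1-4ε)}) / (1 - 4ε)`. -/

open Real MeasureTheory

open Set

theorem intervalIntegral.integral_le_of_nonneg_of_le_on_Ioo {f g : ℝ → ℝ} {a b : ℝ}
    (hab : a ≤ b) (hf : ∀ x ∈ Ioo a b, 0 ≤ f x) (hfg : ∀ x ∈ Ioo a b, f x ≤ g x)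
    (hg : IntervalIntegrable g volume a b) :
    ∫ x in a..b, f x ≤ ∫ x in a..b, g x := by
  simp only [intervalIntegral.integral_of_le hab, integral_Ioc_eq_integral_Ioo]
  refine integral_mono_of_nonneg ?_ (hg.1.mono_set Ioo_subset_Ioc_self) ?_
  · exact (ae_restrict_iff' measurableSet_Ioo).2 (ae_of_all _ hf)
  · exact (ae_restrict_iff' measurableSet_Ioo).2 (ae_of_all _ hfg)

theorem integral_exp_mul {c : ℝ} (hc : c ≠ 0) (a b : ℝ) :
    ∫ x in a..b, exp (c * x) = (exp (c * b) - exp (c * a)) / c := by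
  rw [intervalIntegral.integral_comp_mul_left (fun x => exp x) hc, integral_exp, smul_eq_mul,
    inv_mul_eq_div]

theorem Real.exp_sub_one_le_mul_exp (t : ℝ) : exp t - 1 ≤ t * exp t := by
  have h := mul_le_mul_of_nonneg_left (one_sub_le_exp_neg t) (exp_pos t).le
  rw [← exp_add, add_neg_cancel, exp_zero] at h
  linarith

theorem Real.sqrt_mul_mem_Icc {m M a b : ℝ} (hm : 0 ≤ m) (ha : a ∈ Icc m M)
    (hb : b ∈ Icc m M) : √(a * b) ∈ Icc m M := by
  have hM : 0 ≤ M := hm.trans (ha.1.trans ha.2)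
  constructor
  · calc m = √(m * m) := (sqrt_mul_self hm).symm
      _ ≤ √(a * b) := sqrt_le_sqrt (mul_le_mul ha.1 hb.1 hm (hm.trans ha.1))
  · calc √(a * b) ≤ √(M * M) := sqrt_le_sqrt (mul_le_mul ha.2 hb.2 (hm.trans hb.1) hM)
      _ = M := sqrt_mul_self hM

theorem sq_one_sub_le_sq_exp_sub_one {s t : ℝ} (hs : s ∈ Icc (exp (-t)) (exp t)) :
    (1 - s) ^ 2 ≤ (exp t - 1) ^ 2 := by
  have h₁ := one_sub_le_exp_neg t
  have h₂ := add_one_le_exp t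
  exact sq_le_sq' (by linarith [hs.2]) (by linarith [hs.1])

theorem sq_one_sub_sqrt_mul_le {a b t K : ℝ} (htK : t ≤ K) (ha : a ∈ Icc (exp (-t)) (exp t))
    (hb : b ∈ Icc (exp (-t)) (exp t)) :
    (1 - √(a * b)) ^ 2 ≤ t ^ 2 * exp (2 * K) := by
  have ht : 0 ≤ t := by
    have := exp_le_exp.1 (ha.1.trans ha.2)
    linarith
  have hexp : 0 ≤ exp t - 1 := by linarith [add_one_le_exp t]
  calc (1 - √(a * b)) ^ 2 ≤ (exp t - 1) ^ 2 :=
        sq_one_sub_le_sq_exp_sub_one (sqrt_mul_mem_Icc (exp_pos _).le ha hb)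
    _ ≤ (t * exp K) ^ 2 := by
        gcongr
        exact (exp_sub_one_le_mul_exp t).trans (by gcongr)
    _ = t ^ 2 * exp (2 * K) := by rw [mul_pow, ← exp_nat_mul]; norm_num

theorem mul_exp_le_one_of_le_neg_mul_log {δ ε α y : ℝ} (hδ0 : 0 < δ) (hδ1 : δ ≤ 1)
    (hε : 0 ≤ ε) (hεα : 2 * ε * α ≤ 1) (hy : y ≤ -α * log δ) :
    δ * exp (2 * ε * y) ≤ 1 := by
  have hlog : log δ ≤ 0 := log_nonpos hδ0.le hδ1
  rw [← exp_log hδ0, ← exp_add, exp_le_one_iff]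
  nlinarith [mul_le_mul_of_nonneg_left hy (by positivity : 0 ≤ 2 * ε)]

/-- Quantitative Hellinger-type bound: if q satisfies the stated exponential
bounds on (0, -α log δ), then the Hellinger-type integral is bounded by
C δ²(1 - δ^{α(1-4ε)}) with C depending only on κ, ε, α. -/
theorem hellinger_integral_bound (α ε κ : ℝ) (hα : 0 < α) (hε0 : 0 < ε)
    (hε : ε < 1 / 8) (hκ : 0 < κ) (hαε : 4 * ε * α < 1) :
    ∃ C > 0, ∀ δ : ℝ, 0 < δ → δ < 1 → ∀ q q' : ℝ → ℝ,
      (∀ y ∈ Set.Ioo (0:ℝ) (-α * Real.log δ), HasDerivAt q (q' y) y) →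
      (∀ y ∈ Set.Ioo (0:ℝ) (-α * Real.log δ),
        Real.exp (-(κ * δ * Real.exp (2 * ε * y))) ≤ Real.exp (-q y) ∧
          Real.exp (-q y) ≤ Real.exp (κ * δ * Real.exp (2 * ε * y))) →
      (∀ y ∈ Set.Ioo (0:ℝ) (-α * Real.log δ),
        Real.exp (-(κ * δ * Real.exp (2 * ε * y))) ≤ 1 + q' y ∧
          1 + q' y ≤ Real.exp (κ * δ * Real.exp (2 * ε * y))) →
      (∫ y in (0:ℝ)..(-α * Real.log δ),
          Real.exp (-y) *
            (1 - Real.sqrt (Real.exp (-q y) * (1 + q' y))) ^ 2) ≤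
        C * δ ^ 2 * (1 - δ ^ (α * (1 - 4 * ε))) := by
  have hε4 : 0 < 1 - 4 * ε := by linarith
  refine ⟨κ ^ 2 * exp (2 * κ) / (1 - 4 * ε), by positivity, ?_⟩
  intro δ hδ0 hδ1 q q' _ hq hq'
  set L := -α * log δ with hL_def
  have hL : 0 ≤ L := mul_nonneg_of_nonpos_of_nonpos (by linarith) (log_nonpos hδ0.le hδ1.le)
  have hpointwise : ∀ y ∈ Ioo 0 L, exp (-y) * (1 - √(exp (-q y) * (1 + q' y))) ^ 2 ≤
      κ ^ 2 * exp (2 * κ) * δ ^ 2 * exp ((4 * ε - 1) * y) := by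
    intro y hy
    have htκ : κ * δ * exp (2 * ε * y) ≤ κ := by
      have := mul_exp_le_one_of_le_neg_mul_log hδ0 hδ1.le hε0.le (by linarith) hy.2.le
      nlinarith
    have hexp : exp (-y) * exp (2 * ε * y) ^ 2 = exp ((4 * ε - 1) * y) := by
      rw [sq, ← exp_add, ← exp_add]; ring_nf
    calc _ ≤ exp (-y) * ((κ * δ * exp (2 * ε * y)) ^ 2 * exp (2 * κ)) := by
          gcongr; exact sq_one_sub_sqrt_mul_le htκ (hq y hy) (hq' y hy)
      _ = _ := by linear_combination (κ ^ 2 * δ ^ 2 * exp (2 * κ)) * hexp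
  have hpow : exp ((4 * ε - 1) * L) = δ ^ (α * (1 - 4 * ε)) := by
    rw [rpow_def_of_pos hδ0, hL_def]; ring_nf
  calc _ ≤ ∫ y in (0:ℝ)..L, κ ^ 2 * exp (2 * κ) * δ ^ 2 * exp ((4 * ε - 1) * y) :=
        intervalIntegral.integral_le_of_nonneg_of_le_on_Ioo hL (fun y _ => by positivity)
          hpointwise (Continuous.intervalIntegrable (by fun_prop) _ _)
    _ = _ := by
        rw [intervalIntegral.integral_const_mul, integral_exp_mul (by linarith), hpow,
          mul_zero, exp_zero, show 4 * ε - 1 = -(1 - 4 * ε) by ring]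
        field_simp
        ring
end
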